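/- arXiv:2508.10793 — 7 statements merged into one kernel-verified Lean document; each statement's English description precedes it below -/
import Mathlib

section
/- Fix an integer n ≥ 1 and a real k > 0, and for i ∈ {0,…,n−1} define f_i : ℝ → ℝ² by f_i(t) = e^{kt}·(cos(t − 2πi/n), sin(t − 2πi/n)). Then (i) for every i, f_i(t) → (0,0) as t → −∞, and (ii) for every point A ∈ ℝ² with A ≠ (0,0), there exist an index i ∈ {0,…,n−1}, a parameter t ∈ ℝ and a scalar λ ∈ [0,1] such that A = λ · f_i(t) (i.e., A lies on the segment from the origin to f_i(t), so A is exposed by agent i). -/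
/-!
Write `A = ‖A‖ (cos θ, sin θ)`. Along `t = θ + 2πm` the spiral points in the direction of `A` with
radius `e^{kt} → ∞`, so for large `m` the point `A` is the multiple `‖A‖ / e^{kt} ≤ 1` of it.
Agent `0` alone therefore exposes every point.
-/

open Real Filter

noncomputable def polarUnit (θ : ℝ) : EuclideanSpace ℝ (Fin 2) :=
  WithLp.toLp 2 ![cos θ, sin θ]

theorem norm_polarUnit (θ : ℝ) : ‖polarUnit θ‖ = 1 := by
  simp [polarUnit, EuclideanSpace.norm_eq, Fin.sum_univ_two]

theorem polarUnit_add_nat_mul_two_pi (θ : ℝ) (m : ℕ) :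
    polarUnit (θ + m * (2 * π)) = polarUnit θ := by
  rw [polarUnit, polarUnit, cos_add_nat_mul_two_pi, sin_add_nat_mul_two_pi]

theorem exists_eq_norm_smul_polarUnit (A : EuclideanSpace ℝ (Fin 2)) :
    ∃ θ, A = ‖A‖ • polarUnit θ := by
  set z : ℂ := ⟨A 0, A 1⟩
  have hnorm : ‖A‖ = ‖z‖ := by
    simp [EuclideanSpace.norm_eq, Fin.sum_univ_two, Complex.norm_eq_sqrt_sq_add_sq, z]
  refine ⟨z.arg, ?_⟩
  ext j
  fin_cases j
  · simp [polarUnit, hnorm, Complex.norm_mul_cos_arg, z]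
  · simp [polarUnit, hnorm, Complex.norm_mul_sin_arg, z]

theorem tendsto_exp_mul_add_nat_mul_two_pi {k : ℝ} (hk : 0 < k) (θ : ℝ) :
    Tendsto (fun m : ℕ => exp (k * (θ + m * (2 * π)))) atTop atTop := by
  refine tendsto_exp_atTop.comp (Tendsto.const_mul_atTop hk (tendsto_atTop_add_const_left _ θ ?_))
  exact tendsto_natCast_atTop_atTop.atTop_mul_const (by positivity)

theorem exists_mem_segment_spiral {k : ℝ} (hk : 0 < k) (A : EuclideanSpace ℝ (Fin 2)) :
    ∃ t l : ℝ, l ∈ Set.Icc (0 : ℝ) 1 ∧ A = l • (exp (k * t) • polarUnit t) := by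
  obtain ⟨θ, hθ⟩ := exists_eq_norm_smul_polarUnit A
  obtain ⟨m, hm⟩ := ((tendsto_exp_mul_add_nat_mul_two_pi hk θ).eventually_ge_atTop ‖A‖).exists
  set t := θ + m * (2 * π)
  refine ⟨t, ‖A‖ / exp (k * t), ⟨by positivity, div_le_one_of_le₀ hm (exp_pos _).le⟩, ?_⟩
  rw [smul_smul, div_mul_cancel₀ _ (exp_pos _).ne', polarUnit_add_nat_mul_two_pi, ← hθ]

/-- For `n ≥ 1`, `k > 0` and the uniform-spiral trajectories
`f_i(t) = e^{kt}(cos(t - 2πi/n), sin(t - 2πi/n))`, every `f_i` tends to the origin as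
`t → -∞`, and every nonzero point `A` of the plane is exposed by some agent, i.e.
`A = λ • f_i t` for some `i`, `t` and `λ ∈ [0,1]`. -/
theorem statement_2 (n : ℕ) (hn : 1 ≤ n) (k : ℝ) (hk : 0 < k) :
    let f : Fin n → ℝ → EuclideanSpace ℝ (Fin 2) :=
      fun i t => WithLp.toLp 2 ![Real.exp (k * t) * Real.cos (t - 2 * π * ((i : ℕ) : ℝ) / n),
                   Real.exp (k * t) * Real.sin (t - 2 * π * ((i : ℕ) : ℝ) / n)]
    (∀ i, Tendsto (f i) atBot (nhds 0)) ∧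
    (∀ A : EuclideanSpace ℝ (Fin 2), A ≠ 0 →
      ∃ (i : Fin n) (t : ℝ) (l : ℝ), l ∈ Set.Icc (0 : ℝ) 1 ∧ A = l • f i t) := by
  intro f
  have hf : ∀ i t, f i t = exp (k * t) • polarUnit (t - 2 * π * ((i : ℕ) : ℝ) / n) := by
    intro i t
    ext j
    fin_cases j <;> simp [f, polarUnit]
  constructor
  · intro i
    rw [tendsto_zero_iff_norm_tendsto_zero]
    simp only [hf, norm_smul, norm_polarUnit, mul_one, norm_of_nonneg (exp_pos _).le]
    exact tendsto_exp_atBot.comp (tendsto_id.const_mul_atBot hk)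
  · intro A _
    obtain ⟨t, l, hl, hA⟩ := exists_mem_segment_spiral hk A
    exact ⟨⟨0, hn⟩, t, l, hl, by simpa [hf] using hA⟩
end

section
/- For every real a > 0, the function z : (0,∞) → ℝ defined by z(k) = (√(1+k²)/k)·e^{k/a} is strictly convex on (0,∞); in fact its second derivative is strictly positive at every k > 0. -/
/-!
On `(0, ∞)` we have `z = exp ∘ logZ a` with `logZ a k = log (1 + k²) / 2 - log k + k / a`, whose
second derivative `(1 + 3k²) / (k² (1 + k²)²)` is positive: `z` is strictly log-convex.
Hence `z'' = ((logZ a)'' + (logZ a)'²) · z > 0`.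
-/

open Real

open Filter Topology

theorem hasDerivAt_deriv_exp_comp {h h' : ℝ → ℝ} {x h'' : ℝ}
    (hh : ∀ᶠ y in 𝓝 x, HasDerivAt h (h' y) y) (hh' : HasDerivAt h' h'' x) :
    HasDerivAt (deriv fun y => exp (h y)) ((h'' + h' x ^ 2) * exp (h x)) x := by
  have hderiv : deriv (fun y => exp (h y)) =ᶠ[𝓝 x] fun y => exp (h y) * h' y :=
    hh.mono fun y hy => hy.exp.deriv
  refine HasDerivAt.congr_of_eventuallyEq ?_ hderiv
  exact (hh.self_of_nhds.exp.mul hh').congr_deriv (by ring)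

noncomputable def logZ (a k : ℝ) : ℝ := log (1 + k ^ 2) / 2 - log k + k / a

theorem exp_logZ (a : ℝ) {k : ℝ} (hk : 0 < k) :
    exp (logZ a k) = √(1 + k ^ 2) / k * exp (k / a) := by
  rw [logZ, ← log_sqrt (by positivity), exp_add, exp_sub, exp_log (by positivity), exp_log hk]

theorem hasDerivAt_one_add_sq (k : ℝ) : HasDerivAt (fun k : ℝ => 1 + k ^ 2) (2 * k) k := by
  simpa using (hasDerivAt_pow 2 k).const_add 1

theorem hasDerivAt_logZ (a : ℝ) {k : ℝ} (hk : k ≠ 0) :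
    HasDerivAt (logZ a) (k / (1 + k ^ 2) - k⁻¹ + a⁻¹) k := by
  have h := ((((hasDerivAt_one_add_sq k).log (by positivity)).div_const 2).sub
    (hasDerivAt_log hk)).add ((hasDerivAt_id' k).div_const a)
  refine h.congr_deriv ?_
  field_simp

theorem hasDerivAt_deriv_logZ (a : ℝ) {k : ℝ} (hk : k ≠ 0) :
    HasDerivAt (fun k : ℝ => k / (1 + k ^ 2) - k⁻¹ + a⁻¹)
      ((1 + 3 * k ^ 2) / (k ^ 2 * (1 + k ^ 2) ^ 2)) k := by
  have h := (((hasDerivAt_id' k).div (hasDerivAt_one_add_sq k) (by positivity)).sub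
    (hasDerivAt_inv hk)).add_const a⁻¹
  refine h.congr_deriv ?_
  field_simp
  ring

theorem statement_3_general (a : ℝ) :
    let z : ℝ → ℝ := fun k => Real.sqrt (1 + k ^ 2) / k * Real.exp (k / a)
    StrictConvexOn ℝ (Set.Ioi (0 : ℝ)) z ∧
      ∀ k : ℝ, 0 < k → 0 < deriv (deriv z) k := by
  intro z
  have hz_eq : ∀ k, 0 < k → z =ᶠ[𝓝 k] fun k => exp (logZ a k) := fun k hk =>
    eventually_of_mem (Ioi_mem_nhds hk) fun y hy => (exp_logZ a hy).symm
  have hz'' : ∀ k : ℝ, 0 < k → 0 < deriv (deriv z) k := by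
    intro k hk
    have hlogZ : ∀ᶠ y in 𝓝 k, HasDerivAt (logZ a) (y / (1 + y ^ 2) - y⁻¹ + a⁻¹) y :=
      eventually_of_mem (Ioi_mem_nhds hk) fun y hy => hasDerivAt_logZ a (ne_of_gt hy)
    rw [(hz_eq k hk).deriv.deriv_eq,
      (hasDerivAt_deriv_exp_comp hlogZ (hasDerivAt_deriv_logZ a hk.ne')).deriv]
    positivity
  have hz_cont : ContinuousOn z (Set.Ioi 0) := fun k hk =>
    ((hasDerivAt_logZ a hk.ne').exp.continuousAt.congr (hz_eq k hk).symm).continuousWithinAt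
  exact ⟨strictConvexOn_of_deriv2_pos' (convex_Ioi 0) hz_cont hz'', hz''⟩

/-- For every `a > 0`, the function `z k = (√(1+k²)/k) e^{k/a}` is strictly
convex on `(0,∞)`, and its second derivative is strictly positive at every `k > 0`. -/
theorem statement_3 (a : ℝ) (ha : 0 < a) :
    let z : ℝ → ℝ := fun k => Real.sqrt (1 + k ^ 2) / k * Real.exp (k / a)
    StrictConvexOn ℝ (Set.Ioi (0 : ℝ)) z ∧
      ∀ k : ℝ, 0 < k → 0 < deriv (deriv z) k :=
  statement_3_general a
end

section
/- For real n > 0, let κ_n denote the unique positive real root of x³ + x = n/(2π), and define U_n := (√(1+κ_n²)/κ_n)·e^{2πκ_n/n}. Then the function n ↦ U_n is strictly decreasing on (0,∞), and U_n → 1 as n → ∞. -/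
/-!
Since `κ_n³ + κ_n = n/(2π)`, we have `n = 2πκ_n(1 + κ_n²)`, so the exponent `2πκ_n/n` equals
`1/(1 + κ_n²)` and `U_n = g(κ_n)` with `g t = √(1 + 1/t²) · e^{1/(1+t²)}`. Both factors of `g` are
positive and strictly decreasing on `(0,∞)` and tend to `1`, while `n ↦ κ_n` is strictly increasing
and unbounded because `x ↦ x³ + x` is.
-/

open Real Filter Set Topology

/-- The cost `U_n` as a function of `t = κ_n`. -/
noncomputable def spiralCost (t : ℝ) : ℝ :=
  √(1 + t ^ 2) / t * exp (1 + t ^ 2)⁻¹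

lemma sqrt_one_add_sq_div {t : ℝ} (ht : 0 < t) : √(1 + t ^ 2) / t = √(1 + (t ^ 2)⁻¹) := by
  rw [show 1 + (t ^ 2)⁻¹ = (1 + t ^ 2) / t ^ 2 by field_simp; ring, sqrt_div' _ (by positivity),
    sqrt_sq ht.le]

lemma spiralCost_strictAntiOn : StrictAntiOn spiralCost (Ioi 0) := by
  intro a (ha : 0 < a) b (hb : 0 < b) hab
  have hsq : a ^ 2 < b ^ 2 := by gcongr
  have hsqrt : √(1 + (b ^ 2)⁻¹) < √(1 + (a ^ 2)⁻¹) := by gcongr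
  have hexp : exp (1 + b ^ 2)⁻¹ ≤ exp (1 + a ^ 2)⁻¹ := by gcongr
  simp only [spiralCost, sqrt_one_add_sq_div ha, sqrt_one_add_sq_div hb]
  exact mul_lt_mul hsqrt hexp (exp_pos _) (sqrt_nonneg _)

lemma tendsto_spiralCost_atTop : Tendsto spiralCost atTop (𝓝 1) := by
  have hsq : Tendsto (fun t : ℝ => t ^ 2) atTop atTop := tendsto_pow_atTop two_ne_zero
  have hsqrt : Tendsto (fun t : ℝ => √(1 + (t ^ 2)⁻¹)) atTop (𝓝 1) := by
    simpa using ((tendsto_inv_atTop_zero.comp hsq).const_add 1).sqrt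
  have hexp : Tendsto (fun t : ℝ => exp (1 + t ^ 2)⁻¹) atTop (𝓝 1) := by
    simpa using (tendsto_inv_atTop_zero.comp (tendsto_atTop_add_const_left _ 1 hsq)).rexp
  have hprod := hsqrt.mul hexp
  rw [mul_one] at hprod
  refine hprod.congr' ?_
  filter_upwards [eventually_gt_atTop 0] with t ht
  simp only [spiralCost, sqrt_one_add_sq_div ht]

lemma strictMono_cube_add_self : StrictMono (fun x : ℝ => x ^ 3 + x) :=
  (Odd.strictMono_pow (by decide)).add_monotone monotone_id

lemma two_pi_mul_div_eq_inv {k n : ℝ} (hn : n ≠ 0) (hk : k ^ 3 + k = n / (2 * π)) :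
    2 * π * k / n = (1 + k ^ 2)⁻¹ := by
  have hn' : n = 2 * π * k * (1 + k ^ 2) := by
    field_simp at hk
    linarith
  rw [div_eq_iff hn, hn']
  field_simp

section CubicRoot

variable {κ : ℝ → ℝ}

lemma strictMonoOn_of_cube_add_self_eq (hκ : ∀ n : ℝ, 0 < n → κ n ^ 3 + κ n = n / (2 * π)) :
    StrictMonoOn κ (Ioi 0) := by
  intro a (ha : 0 < a) b (hb : 0 < b) hab
  refine strictMono_cube_add_self.lt_iff_lt.1 ?_
  rw [hκ a ha, hκ b hb]
  gcongr

lemma tendsto_atTop_of_cube_add_self_eq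
    (hκ : ∀ n : ℝ, 0 < n → κ n ^ 3 + κ n = n / (2 * π)) : Tendsto κ atTop atTop := by
  refine tendsto_atTop.2 fun C => ?_
  filter_upwards [eventually_gt_atTop 0, eventually_ge_atTop (2 * π * (C ^ 3 + C))]
    with n hn hnC
  refine strictMono_cube_add_self.le_iff_le.1 ?_
  rw [hκ n hn, le_div_iff₀ (by positivity)]
  linarith

end CubicRoot

/-- For real `n > 0` let `κ n` be the unique positive root of
`x³ + x = n/(2π)`, and let `U n = (√(1+κ_n²)/κ_n) e^{2πκ_n/n}`.  Then `U` is strictly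
decreasing on `(0,∞)` and `U n → 1` as `n → ∞`. -/
theorem statement_6 (κ : ℝ → ℝ)
    (hκ : ∀ n : ℝ, 0 < n → 0 < κ n ∧ (κ n) ^ 3 + κ n = n / (2 * π)) :
    let U : ℝ → ℝ := fun n => Real.sqrt (1 + (κ n) ^ 2) / κ n * Real.exp (2 * π * κ n / n)
    StrictAntiOn U (Set.Ioi (0 : ℝ)) ∧ Tendsto U atTop (nhds 1) := by
  intro U
  have hroot n (hn : 0 < n) := (hκ n hn).2
  have hU : EqOn (spiralCost ∘ κ) U (Ioi 0) := fun n (hn : 0 < n) => by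
    simp only [U, Function.comp, spiralCost, two_pi_mul_div_eq_inv hn.ne' (hroot n hn)]
  refine ⟨?_, ?_⟩
  · exact (spiralCost_strictAntiOn.comp_strictMonoOn
      (strictMonoOn_of_cube_add_self_eq hroot) fun n hn => (hκ n hn).1).congr hU
  · exact (tendsto_spiralCost_atTop.comp (tendsto_atTop_of_cube_add_self_eq hroot)).congr'
      (eventually_gt_atTop 0 |>.mono hU)
end

section
/- For real n > 0, let κ_n denote the unique positive real root of x³ + x = n/(2π), and set A(x) := √(1+x²)/x for x > 0. Define H(l) := (A(κ_{l+1})/A(κ_l))^{l} · e^{2π(κ_{l+1} − κ_l)} for integers l ≥ 1. Then H(l) ≥ 1 for every integer l ≥ 1; moreover H is strictly decreasing on the positive integers and H(l) → 1 as l → ∞. -/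
/-!
Write `B(m) = log A(κ_m) = ½ log(1 + κ_m⁻²)`, so that `log H(l) = F(l)` with
`F(t) = t (B(t+1) - B(t)) + 2π (κ_{t+1} - κ_t)`. Since `m = 2π κ_m (κ_m² + 1)`, the function
`G(m) = m B(m) + 2π κ_m` satisfies `G' = B`, so `F(a) = ∫_a^{a+1} B - B(a+1)`. The function `B`
is positive, strictly decreasing with limit `0`, and strictly convex
(`B'(m) = -1/(m (3κ_m² + 1))` increases); hence `0 < F(a) < B(a)`, `F` decreases, and `F → 0`.
-/

open Real Filter Set

noncomputable section

lemma exists_mem_Ioo_sub_eq_of_hasDerivAt {f f' : ℝ → ℝ} {a : ℝ}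
    (hf : ∀ x ∈ Icc a (a + 1), HasDerivAt f (f' x) x) :
    ∃ c ∈ Ioo a (a + 1), f (a + 1) - f a = f' c := by
  obtain ⟨c, hc, h⟩ := exists_hasDerivAt_eq_slope f f' (lt_add_one a)
    (fun x hx => (hf x hx).continuousAt.continuousWithinAt)
    (fun x hx => hf x (Ioo_subset_Icc_self hx))
  exact ⟨c, hc, by simpa using h.symm⟩

lemma strictMono_two_pi_mul_cube_add_self : StrictMono fun x : ℝ => 2 * π * (x ^ 3 + x) :=
  ((Odd.strictMono_pow (by decide)).add strictMono_id).const_mul (by positivity)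

lemma surjective_two_pi_mul_cube_add_self :
    Function.Surjective fun x : ℝ => 2 * π * (x ^ 3 + x) := by
  have hTop : Tendsto (fun x : ℝ => x ^ 3 + x) atTop atTop :=
    (tendsto_pow_atTop (by norm_num)).atTop_add_atTop tendsto_id
  have hBot : Tendsto (fun x : ℝ => x ^ 3 + x) atBot atBot := by
    refine (tendsto_neg_atTop_atBot.comp (hTop.comp tendsto_neg_atBot_atTop)).congr fun x => ?_
    simp only [Function.comp_apply]
    ring
  exact (by fun_prop : Continuous fun x : ℝ => 2 * π * (x ^ 3 + x)).surjective
    (hTop.const_mul_atTop (by positivity)) (hBot.const_mul_atBot (by positivity))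

def cubicOrderIso : ℝ ≃o ℝ :=
  StrictMono.orderIsoOfSurjective _ strictMono_two_pi_mul_cube_add_self
    surjective_two_pi_mul_cube_add_self

def kappa (m : ℝ) : ℝ := cubicOrderIso.symm m

lemma two_pi_mul_kappa_cube_add (m : ℝ) : 2 * π * (kappa m ^ 3 + kappa m) = m :=
  cubicOrderIso.apply_symm_apply m

lemma eq_kappa_of_cube_add {m x : ℝ} (h : x ^ 3 + x = m / (2 * π)) : x = kappa m := by
  refine (cubicOrderIso.symm_apply_eq.2 ?_).symm
  change m = 2 * π * (x ^ 3 + x)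
  rw [h]
  field_simp

lemma kappa_strictMono : StrictMono kappa := cubicOrderIso.symm.strictMono

lemma kappa_pos {m : ℝ} (hm : 0 < m) : 0 < kappa m := by
  simpa [← eq_kappa_of_cube_add (m := 0) (x := 0) (by simp)] using kappa_strictMono hm

lemma hasDerivAt_kappa (m : ℝ) : HasDerivAt kappa (2 * π * (3 * kappa m ^ 2 + 1))⁻¹ m := by
  have hφ : HasDerivAt (fun x : ℝ => 2 * π * (x ^ 3 + x)) (2 * π * (3 * kappa m ^ 2 + 1))
      (kappa m) := by
    refine (((hasDerivAt_pow 3 (kappa m)).add (hasDerivAt_id' (kappa m))).const_mul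
      (2 * π)).congr_deriv ?_
    norm_num
  exact hφ.of_local_left_inverse cubicOrderIso.symm.continuous.continuousAt (by positivity)
    (Eventually.of_forall two_pi_mul_kappa_cube_add)

lemma tendsto_kappa_atTop : Tendsto kappa atTop atTop := cubicOrderIso.symm.tendsto_atTop

def logA (m : ℝ) : ℝ := log (1 + (kappa m ^ 2)⁻¹) / 2

def logA' (m : ℝ) : ℝ := -(m * (3 * kappa m ^ 2 + 1))⁻¹

lemma exp_logA {m : ℝ} (hm : 0 < m) : exp (logA m) = √(1 + kappa m ^ 2) / kappa m := by
  have hκ := kappa_pos hm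
  have hsqrt : √(1 + (kappa m ^ 2)⁻¹) = √(1 + kappa m ^ 2) / kappa m := by
    rw [show 1 + (kappa m ^ 2)⁻¹ = (1 + kappa m ^ 2) / kappa m ^ 2 by field_simp; ring,
      sqrt_div' _ (by positivity), sqrt_sq hκ.le]
  rw [← hsqrt, sqrt_eq_rpow, rpow_def_of_pos (by positivity), logA]
  ring_nf

lemma hasDerivAt_logA {m : ℝ} (hm : 0 < m) : HasDerivAt logA (logA' m) m := by
  have hκ := kappa_pos hm
  have hκ2 : kappa m ^ 2 ≠ 0 := by positivity
  refine ((((hasDerivAt_kappa m).fun_pow 2).fun_inv hκ2).const_add 1).log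
    (by positivity) |>.div_const 2 |>.congr_deriv ?_
  have hm' := two_pi_mul_kappa_cube_add m
  rw [logA']
  generalize kappa m = k at *
  subst hm'
  field_simp
  ring

lemma logA_pos {m : ℝ} (hm : 0 < m) : 0 < logA m := by
  have := kappa_pos hm
  have : 0 < log (1 + (kappa m ^ 2)⁻¹) := log_pos (lt_add_of_pos_right 1 (by positivity))
  exact half_pos this

lemma logA_strictAntiOn : StrictAntiOn logA (Ioi 0) := by
  intro a (ha : 0 < a) b _ hab
  have := kappa_pos ha
  have := kappa_strictMono hab
  unfold logA
  gcongr

lemma logA'_strictMonoOn : StrictMonoOn logA' (Ioi 0) := by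
  intro a (ha : 0 < a) b _ hab
  have := kappa_pos ha
  have := kappa_strictMono hab
  unfold logA'
  gcongr

lemma tendsto_logA_atTop : Tendsto logA atTop (nhds 0) := by
  have h : Tendsto (fun m => 1 + (kappa m ^ 2)⁻¹) atTop (nhds 1) := by
    simpa using (((tendsto_pow_atTop two_ne_zero).comp tendsto_kappa_atTop).inv_tendsto_atTop
      |>.const_add 1)
  show Tendsto (fun m => log (1 + (kappa m ^ 2)⁻¹) / 2) atTop (nhds 0)
  simpa using ((continuousAt_log one_ne_zero).tendsto.comp h).div_const 2

def logAPrimitive (m : ℝ) : ℝ := m * logA m + 2 * π * kappa m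

lemma hasDerivAt_logAPrimitive {m : ℝ} (hm : 0 < m) : HasDerivAt logAPrimitive (logA m) m := by
  refine (((hasDerivAt_id' m).mul (hasDerivAt_logA hm)).add
    ((hasDerivAt_kappa m).const_mul (2 * π))).congr_deriv ?_
  have hm' := two_pi_mul_kappa_cube_add m
  have hκ := kappa_pos hm
  rw [logA']
  generalize kappa m = k at *
  subst hm'
  field_simp
  ring

/-- `logH l = log H(l)`, extended to real `l`. -/
def logH (t : ℝ) : ℝ := t * (logA (t + 1) - logA t) + 2 * π * (kappa (t + 1) - kappa t)

lemma logH_eq_sub (t : ℝ) : logH t = logAPrimitive (t + 1) - logAPrimitive t - logA (t + 1) := by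
  rw [logH, logAPrimitive, logAPrimitive]
  ring

lemma logH_mem_Ioo {a : ℝ} (ha : 0 < a) : logH a ∈ Ioo 0 (logA a) := by
  obtain ⟨c, hc, hG⟩ := exists_mem_Ioo_sub_eq_of_hasDerivAt fun x hx =>
    hasDerivAt_logAPrimitive (ha.trans_le hx.1)
  have hc0 : 0 < c := ha.trans hc.1
  have h₁ := logA_strictAntiOn hc0 (ha.trans (lt_add_one a)) hc.2
  have h₂ := logA_strictAntiOn ha hc0 hc.1
  have h₃ := logA_pos (ha.trans (lt_add_one a))
  rw [logH_eq_sub, hG]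
  constructor <;> linarith

lemma hasDerivAt_logH {t : ℝ} (ht : 0 < t) :
    HasDerivAt logH (logA (t + 1) - logA t - logA' (t + 1)) t := by
  have ht1 : 0 < t + 1 := by linarith
  have hshift : HasDerivAt (fun s : ℝ => s + 1) 1 t := (hasDerivAt_id' t).add_const 1
  have h₁ := ((hasDerivAt_logAPrimitive ht1).comp t hshift).sub (hasDerivAt_logAPrimitive ht)
    |>.sub ((hasDerivAt_logA ht1).comp t hshift)
  rw [mul_one, mul_one] at h₁
  exact h₁.congr_of_eventuallyEq (Eventually.of_forall logH_eq_sub)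

lemma logH_add_one_lt {a : ℝ} (ha : 0 < a) : logH (a + 1) < logH a := by
  obtain ⟨c, hc, hF⟩ := exists_mem_Ioo_sub_eq_of_hasDerivAt fun x hx =>
    hasDerivAt_logH (ha.trans_le hx.1)
  have hc0 : 0 < c := ha.trans hc.1
  obtain ⟨z, hz, hB⟩ := exists_mem_Ioo_sub_eq_of_hasDerivAt fun x hx =>
    hasDerivAt_logA (hc0.trans_le hx.1)
  have := logA'_strictMonoOn (hc0.trans hz.1) (hc0.trans (lt_add_one c)) hz.2
  linarith

lemma tendsto_logH_atTop : Tendsto logH atTop (nhds 0) :=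
  tendsto_of_tendsto_of_tendsto_of_le_of_le' tendsto_const_nhds tendsto_logA_atTop
    (eventually_gt_atTop 0 |>.mono fun _ ha => (logH_mem_Ioo ha).1.le)
    (eventually_gt_atTop 0 |>.mono fun _ ha => (logH_mem_Ioo ha).2.le)

end

/-- With `κ m` the unique positive root of `x³ + x = m/(2π)` and
`A x = √(1+x²)/x`, define `H l = (A(κ_{l+1})/A(κ_l))^l · e^{2π(κ_{l+1} - κ_l)}`.
Then `H l ≥ 1` for every integer `l ≥ 1`, `H` is strictly decreasing on the positive
integers, and `H l → 1` as `l → ∞`. -/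
theorem statement_8 (κ : ℝ → ℝ)
    (hκ : ∀ m : ℝ, 0 < m → 0 < κ m ∧ (κ m) ^ 3 + κ m = m / (2 * π)) :
    let A : ℝ → ℝ := fun x => Real.sqrt (1 + x ^ 2) / x
    let H : ℕ → ℝ := fun l =>
      (A (κ ((l : ℝ) + 1)) / A (κ (l : ℝ))) ^ l *
        Real.exp (2 * π * (κ ((l : ℝ) + 1) - κ (l : ℝ)))
    (∀ l : ℕ, 1 ≤ l → 1 ≤ H l) ∧
    (∀ l : ℕ, 1 ≤ l → H (l + 1) < H l) ∧
    Tendsto H atTop (nhds 1) := by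
  intro A H
  have hκ_eq {m : ℝ} (hm : 0 < m) : κ m = kappa m := eq_kappa_of_cube_add (hκ m hm).2
  have hH {l : ℕ} (hl : 1 ≤ l) : H l = exp (logH l) := by
    have hl0 : (0 : ℝ) < l := by exact_mod_cast hl
    have hl1 : (0 : ℝ) < l + 1 := hl0.trans (lt_add_one _)
    simp only [H, A, logH, exp_add, exp_nat_mul, exp_sub, hκ_eq hl0, hκ_eq hl1, exp_logA hl0,
      exp_logA hl1]
  refine ⟨fun l hl => ?_, fun l hl => ?_, ?_⟩
  · rw [hH hl]
    exact one_le_exp (logH_mem_Ioo (by exact_mod_cast hl)).1.le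
  · rw [hH hl, hH (by omega), exp_lt_exp]
    push_cast
    exact logH_add_one_lt (by exact_mod_cast hl)
  · have h := (continuous_exp.tendsto 0).comp (tendsto_logH_atTop.comp tendsto_natCast_atTop_atTop)
    rw [exp_zero] at h
    exact h.congr' (eventually_ge_atTop 1 |>.mono fun l hl => (hH hl).symm)
end

section
/- Let n ≥ 2 be an integer and let c_0 ≥ c_1 ≥ … ≥ c_{n−1} > 0 with c_0 = 1, and let G_j := (∏_{i=0}^{j−1} c_i)^{1/j} for 1 ≤ j ≤ n. For real m > 0 let κ_m denote the unique positive real root of x³ + x = m/(2π) and U_m := (√(1+κ_m²)/κ_m)·e^{2πκ_m/m}. Suppose ℓ ∈ {1,…,n−1} satisfies U_ℓ/G_ℓ ≥ U_{ℓ+1}/G_{ℓ+1} (in particular this holds when ℓ minimizes i ↦ U_{i+1}/G_{i+1} over i ∈ {0,…,n−1} and ℓ ≥ 1). Then c_ℓ ≥ e^{−2πκ_{ℓ+1}/ℓ} · G_ℓ, or equivalently c_ℓ ≥ e^{−2πκ_{ℓ+1}/(ℓ+1)} · G_{ℓ+1}. -/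
open Real

/-!
Everything happens in logarithms: `log U_m = log (√(1 + κ²)/κ) + 2πκ/m` with `κ = κ_m`, and
`j · log G_j` is the partial sum of the `log c_i`. The function `x ↦ log (√(1 + x²)/x)` has
derivative `-1/(x(1 + x²))`, which increases with `x`; as `κ_ℓ (1 + κ_ℓ²) = ℓ/(2π)` and
`κ_ℓ ≤ κ_{ℓ+1}`, this gives `log U_ℓ - log U_{ℓ+1} ≤ 2πκ_{ℓ+1} (1/ℓ - 1/(ℓ+1))`. The hypothesis
then bounds the drop `log G_ℓ - log G_{ℓ+1} = (log G_ℓ - log c_ℓ)/(ℓ+1)` by the same quantity.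
-/

lemma le_of_pow_three_add_le {a b : ℝ} (h : a ^ 3 + a ≤ b ^ 3 + b) : a ≤ b := by
  by_contra! hba
  have := (Odd.strictMono_pow (R := ℝ) (by decide : Odd 3)) hba
  linarith

lemma log_sqrt_one_add_sq_div {x : ℝ} (hx : 0 < x) :
    log (√(1 + x ^ 2) / x) = log (1 + x ^ 2) / 2 - log x := by
  rw [log_div (by positivity) hx.ne', log_sqrt (by positivity)]

lemma hasDerivAt_log_sub_half_log_one_add_sq {x : ℝ} (hx : 0 < x) :
    HasDerivAt (fun y => log y - log (1 + y ^ 2) / 2) (1 / (x * (1 + x ^ 2))) x := by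
  have hsq : HasDerivAt (fun y : ℝ => 1 + y ^ 2) (2 * x) x := by
    simpa using (hasDerivAt_pow 2 x).const_add 1
  refine ((hasDerivAt_log hx.ne').sub ((hsq.log (by positivity)).div_const 2)).congr_deriv ?_
  field_simp
  ring

lemma log_sqrt_one_add_sq_div_sub_le {a b : ℝ} (ha : 0 < a) (hab : a ≤ b) :
    log (√(1 + a ^ 2) / a) - log (√(1 + b ^ 2) / b) ≤ (b - a) / (a * (1 + a ^ 2)) := by
  have hderiv : ∀ x ∈ Set.Ici a, HasDerivAt (fun y => log y - log (1 + y ^ 2) / 2)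
      (1 / (x * (1 + x ^ 2))) x := fun x hx =>
    hasDerivAt_log_sub_half_log_one_add_sq (ha.trans_le hx)
  have hslope := (convex_Ici a).image_sub_le_mul_sub_of_deriv_le
    (fun x hx => (hderiv x hx).continuousAt.continuousWithinAt)
    (fun x hx => (hderiv x (interior_subset hx)).differentiableAt.differentiableWithinAt)
    (C := 1 / (a * (1 + a ^ 2))) (fun x hx => by
      rw [interior_Ici, Set.mem_Ioi] at hx
      rw [(hderiv x (Set.mem_Ici.2 hx.le)).deriv]
      gcongr
      linarith) a Set.self_mem_Ici b hab hab
  rw [log_sqrt_one_add_sq_div ha, log_sqrt_one_add_sq_div (ha.trans_le hab),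
    div_eq_mul_one_div (b - a)]
  linarith

lemma log_sqrt_div_mul_exp_sub_le {a b t s : ℝ} (ha : 0 < a) (hab : a ≤ b)
    (hat : a ^ 3 + a = t / (2 * π)) :
    log (√(1 + a ^ 2) / a * exp (2 * π * a / t)) - log (√(1 + b ^ 2) / b * exp (2 * π * b / s))
      ≤ 2 * π * b / t - 2 * π * b / s := by
  have hb : 0 < b := ha.trans_le hab
  have hslope : (b - a) / (a * (1 + a ^ 2)) = 2 * π * b / t - 2 * π * a / t := by
    rw [show a * (1 + a ^ 2) = a ^ 3 + a by ring, hat]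
    field_simp
  rw [log_mul (by positivity) (exp_ne_zero _), log_mul (by positivity) (exp_ne_zero _),
    log_exp, log_exp]
  linarith [log_sqrt_one_add_sq_div_sub_le ha hab]

noncomputable def geomMean (c : ℕ → ℝ) (j : ℕ) : ℝ := (∏ i ∈ Finset.range j, c i) ^ ((1 : ℝ) / j)

lemma geomMean_pos {c : ℕ → ℝ} {j : ℕ} (hc : ∀ i < j, 0 < c i) : 0 < geomMean c j :=
  rpow_pos_of_pos (Finset.prod_pos fun i hi => hc i (Finset.mem_range.1 hi)) _

lemma natCast_mul_log_geomMean {c : ℕ → ℝ} {j : ℕ} (hc : ∀ i < j, 0 < c i) :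
    j * log (geomMean c j) = ∑ i ∈ Finset.range j, log (c i) := by
  have hprod : 0 < ∏ i ∈ Finset.range j, c i :=
    Finset.prod_pos fun i hi => hc i (Finset.mem_range.1 hi)
  rw [geomMean, log_rpow hprod, log_prod fun i hi => (hc i (Finset.mem_range.1 hi)).ne']
  rcases Nat.eq_zero_or_pos j with rfl | hj
  · simp
  · field_simp

lemma le_log_of_log_geomMean_sub_le {c : ℕ → ℝ} {j : ℕ} {B : ℝ} (hj : 0 < j)
    (hc : ∀ i < j + 1, 0 < c i)
    (hdrop : log (geomMean c j) - log (geomMean c (j + 1)) ≤ B / j - B / (j + 1)) :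
    -B / j + log (geomMean c j) ≤ log (c j) ∧
      -B / (j + 1) + log (geomMean c (j + 1)) ≤ log (c j) := by
  have hj' : (0 : ℝ) < j := by exact_mod_cast hj
  have hsucc : ((j : ℝ) + 1) * log (geomMean c (j + 1)) = j * log (geomMean c j) + log (c j) := by
    have := natCast_mul_log_geomMean hc
    rwa [Finset.sum_range_succ, ← natCast_mul_log_geomMean fun i hi => hc i (by omega),
      Nat.cast_succ] at this
  have hj_le : log (geomMean c j) - log (c j) ≤ B / j :=
    calc log (geomMean c j) - log (c j)
        = (j + 1) * (log (geomMean c j) - log (geomMean c (j + 1))) := by linarith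
      _ ≤ (j + 1) * (B / j - B / (j + 1)) := mul_le_mul_of_nonneg_left hdrop (by positivity)
      _ = B / j := by field_simp; ring
  have hj_succ_le : log (geomMean c (j + 1)) - log (c j) ≤ B / (j + 1) := by
    rw [le_div_iff₀ (by positivity)]
    calc (log (geomMean c (j + 1)) - log (c j)) * (j + 1)
        = j * (log (geomMean c j) - log (c j)) := by linarith
      _ ≤ j * (B / j) := mul_le_mul_of_nonneg_left hj_le hj'.le
      _ = B := by field_simp
  rw [neg_div, neg_div]
  constructor <;> linarith

lemma exp_mul_le_of_add_log_le {x y z : ℝ} (hy : 0 < y) (hz : 0 < z) (h : x + log y ≤ log z) :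
    exp x * y ≤ z := by
  rw [← exp_log hy, ← exp_add]
  exact (le_log_iff_exp_le hz).1 h

lemma log_sub_log_le_of_div_le_div {u v x y : ℝ} (hu : 0 < u) (hv : 0 < v) (hx : 0 < x)
    (hy : 0 < y) (h : v / y ≤ u / x) : log x - log y ≤ log u - log v := by
  have := log_le_log (div_pos hv hy) h
  rw [log_div hv.ne' hy.ne', log_div hu.ne' hx.ne'] at this
  linarith

theorem statement_9_general (n : ℕ) (c : ℕ → ℝ)
    (hpos : ∀ i < n, 0 < c i)
    (κ U : ℝ → ℝ)
    (hκ : ∀ m : ℝ, 0 < m → 0 < κ m ∧ (κ m) ^ 3 + κ m = m / (2 * π))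
    (hU : ∀ m : ℝ, 0 < m →
      U m = Real.sqrt (1 + (κ m) ^ 2) / κ m * Real.exp (2 * π * κ m / m))
    (G : ℕ → ℝ)
    (hG : ∀ j : ℕ, 1 ≤ j → j ≤ n →
      G j = (∏ i ∈ Finset.range j, c i) ^ ((1 : ℝ) / j))
    (ℓ : ℕ) (hℓ1 : 1 ≤ ℓ) (hℓn : ℓ < n)
    (hmin : U ((ℓ : ℝ) + 1) / G (ℓ + 1) ≤ U (ℓ : ℝ) / G ℓ) :
    Real.exp (-(2 * π * κ ((ℓ : ℝ) + 1)) / ℓ) * G ℓ ≤ c ℓ ∧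
    Real.exp (-(2 * π * κ ((ℓ : ℝ) + 1)) / ((ℓ : ℝ) + 1)) * G (ℓ + 1) ≤ c ℓ := by
  have hℓ : (0 : ℝ) < ℓ := by exact_mod_cast hℓ1
  obtain ⟨ha, hacube⟩ := hκ ℓ hℓ
  obtain ⟨hb, hbcube⟩ := hκ (ℓ + 1) (by positivity)
  have hab : κ ℓ ≤ κ (ℓ + 1) := le_of_pow_three_add_le <| by
    rw [hacube, hbcube]; gcongr; linarith
  have hc : ∀ i < ℓ + 1, 0 < c i := fun i hi => hpos i (by omega)
  rw [show G ℓ = geomMean c ℓ from hG ℓ hℓ1 hℓn.le,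
    show G (ℓ + 1) = geomMean c (ℓ + 1) from hG (ℓ + 1) (by omega) hℓn] at hmin ⊢
  have hGℓ := geomMean_pos (j := ℓ) fun i hi => hc i (by omega)
  have hGℓ1 := geomMean_pos hc
  have hUℓ : 0 < U ℓ := by rw [hU ℓ hℓ]; positivity
  have hUℓ1 : 0 < U (ℓ + 1) := by rw [hU (ℓ + 1) (by positivity)]; positivity
  have hU_sub : log (U ℓ) - log (U (ℓ + 1)) ≤
      2 * π * κ (ℓ + 1) / ℓ - 2 * π * κ (ℓ + 1) / (ℓ + 1) := by
    rw [hU ℓ hℓ, hU (ℓ + 1) (by positivity)]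
    exact log_sqrt_div_mul_exp_sub_le ha hab hacube
  obtain ⟨hcℓ, hcℓ1⟩ := le_log_of_log_geomMean_sub_le (c := c) hℓ1 hc
    ((log_sub_log_le_of_div_le_div hUℓ hUℓ1 hGℓ hGℓ1 hmin).trans hU_sub)
  exact ⟨exp_mul_le_of_add_log_le hGℓ (hpos ℓ hℓn) hcℓ,
    exp_mul_le_of_add_log_le hGℓ1 (hpos ℓ hℓn) hcℓ1⟩

/-- Let `n ≥ 2`, speeds `c_0 ≥ c_1 ≥ … ≥ c_{n-1} > 0` with `c_0 = 1`, and
geometric means `G j = (∏_{i<j} c_i)^{1/j}`.  With `κ m` the unique positive root of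
`x³ + x = m/(2π)` and `U m = (√(1+κ_m²)/κ_m) e^{2πκ_m/m}`, if `ℓ ∈ {1,…,n-1}` satisfies
`U_ℓ/G_ℓ ≥ U_{ℓ+1}/G_{ℓ+1}`, then `c_ℓ ≥ e^{-2πκ_{ℓ+1}/ℓ} G_ℓ`, or equivalently
`c_ℓ ≥ e^{-2πκ_{ℓ+1}/(ℓ+1)} G_{ℓ+1}`. -/
theorem statement_9 (n : ℕ) (hn : 2 ≤ n) (c : ℕ → ℝ)
    (hpos : ∀ i < n, 0 < c i)
    (hmono : ∀ i, i + 1 < n → c (i + 1) ≤ c i)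
    (hc0 : c 0 = 1)
    (κ U : ℝ → ℝ)
    (hκ : ∀ m : ℝ, 0 < m → 0 < κ m ∧ (κ m) ^ 3 + κ m = m / (2 * π))
    (hU : ∀ m : ℝ, 0 < m →
      U m = Real.sqrt (1 + (κ m) ^ 2) / κ m * Real.exp (2 * π * κ m / m))
    (G : ℕ → ℝ)
    (hG : ∀ j : ℕ, 1 ≤ j → j ≤ n →
      G j = (∏ i ∈ Finset.range j, c i) ^ ((1 : ℝ) / j))
    (ℓ : ℕ) (hℓ1 : 1 ≤ ℓ) (hℓn : ℓ < n)
    (hmin : U ((ℓ : ℝ) + 1) / G (ℓ + 1) ≤ U (ℓ : ℝ) / G ℓ) :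
    Real.exp (-(2 * π * κ ((ℓ : ℝ) + 1)) / ℓ) * G ℓ ≤ c ℓ ∧
    Real.exp (-(2 * π * κ ((ℓ : ℝ) + 1)) / ((ℓ : ℝ) + 1)) * G (ℓ + 1) ≤ c ℓ :=
  statement_9_general n c hpos κ U hκ hU G hG ℓ hℓ1 hℓn hmin
end

section
/- Let n ≥ 1 be an integer, k > 0 a real, and c_0, c_1, …, c_n positive reals with c_0 = c_n = 1. Let G_j := (∏_{i=0}^{j−1} c_i)^{1/j} for 1 ≤ j ≤ n and G_0 := 1, and assume min_{0 ≤ i ≤ n} c_i ≥ e^{−2πk/n}·G_n. Define φ_j := 2π(n−j)/n − (j/k)·ln(G_j/G_n) for j ∈ {0,…,n}. Then φ_0 = 2π, φ_n = 0, φ_j ≥ φ_{j+1} for every j ∈ {0,…,n−1}, and c_j·e^{−kφ_j} ≤ c_{j+1}·e^{−kφ_{j+1}} for every j ∈ {0,…,n−1}. -/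
open Real Finset

/-!
Writing `S j = ∑_{i<j} log cᵢ = j log G_j`, the angles are
`k φ_j = 2πk(n-j)/n - S j + j log G_n`, so consecutive angles differ by
`k (φ_j - φ_{j+1}) = 2πk/n + log c_j - log G_n`.
The hypothesis `c_i ≥ e^{-2πk/n} G_n`, read at `i = j`, makes this difference nonnegative;
read at `i = j + 1`, it is exactly `log c_j - k φ_j ≤ log c_{j+1} - k φ_{j+1}`.
-/

theorem mul_log_rpow_one_div_prod {c : ℕ → ℝ} {j : ℕ} (hc : ∀ i < j, 0 < c i) :
    (j : ℝ) * log ((∏ i ∈ range j, c i) ^ ((1 : ℝ) / j)) = ∑ i ∈ range j, log (c i) := by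
  rcases Nat.eq_zero_or_pos j with rfl | hj
  · simp
  have hprod : 0 < ∏ i ∈ range j, c i := prod_pos fun i hi => hc i (mem_range.1 hi)
  rw [log_rpow hprod, log_prod fun i hi => (hc i (mem_range.1 hi)).ne', ← mul_assoc,
    mul_one_div_cancel (by exact_mod_cast hj.ne'), one_mul]

theorem sub_le_log_of_exp_neg_mul_le {a g x : ℝ} (hg : 0 < g) (h : exp (-a) * g ≤ x) :
    log g - a ≤ log x := by
  have := log_le_log (by positivity) h
  rw [log_mul (exp_ne_zero _) hg.ne', log_exp] at this
  linarith

theorem mul_exp_neg_le_mul_exp_neg {a b x y : ℝ} (ha : 0 < a) (hb : 0 < b)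
    (h : log a - x ≤ log b - y) : a * exp (-x) ≤ b * exp (-y) := by
  rwa [← exp_log ha, ← exp_log hb, ← exp_add, ← exp_add, exp_le_exp, ← sub_eq_add_neg,
    ← sub_eq_add_neg]

noncomputable def offsetAngle (n : ℕ) (k : ℝ) (G : ℕ → ℝ) (j : ℕ) : ℝ :=
  2 * π * ((n : ℝ) - j) / n - ((j : ℝ) / k) * log (G j / G n)

section OffsetAngle

variable {n : ℕ} {k : ℝ} {c G : ℕ → ℝ}

theorem offsetAngle_zero (hn : n ≠ 0) : offsetAngle n k G 0 = 2 * π := by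
  simp [offsetAngle, hn]

theorem offsetAngle_self : offsetAngle n k G n = 0 := by
  simp [offsetAngle]

variable (hpos : ∀ i ≤ n, 0 < c i)
  (hG : ∀ j : ℕ, 1 ≤ j → j ≤ n → G j = (∏ i ∈ range j, c i) ^ ((1 : ℝ) / j))
include hpos hG

theorem geomMean_pos_s11 {j : ℕ} (hj₁ : 1 ≤ j) (hjn : j ≤ n) : 0 < G j := by
  rw [hG j hj₁ hjn]
  exact rpow_pos_of_pos (prod_pos fun i hi => hpos i ((mem_range.1 hi).le.trans hjn)) _

theorem mul_log_div_geomMean {j : ℕ} (hjn : j ≤ n) :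
    (j : ℝ) * log (G j / G n) = ∑ i ∈ range j, log (c i) - j * log (G n) := by
  rcases Nat.eq_zero_or_pos j with rfl | hj
  · simp
  have hn : 1 ≤ n := hj.trans_le hjn
  rw [log_div (geomMean_pos_s11 hpos hG hj hjn).ne' (geomMean_pos_s11 hpos hG hn le_rfl).ne', mul_sub,
    hG j hj hjn, mul_log_rpow_one_div_prod fun i hi => hpos i (hi.le.trans hjn)]

theorem mul_offsetAngle_sub_succ (hk : k ≠ 0) {j : ℕ} (hj : j < n) :
    k * (offsetAngle n k G j - offsetAngle n k G (j + 1))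
      = 2 * π * k / n + log (c j) - log (G n) := by
  have hφj := mul_log_div_geomMean hpos hG hj.le
  have hφj₁ := mul_log_div_geomMean hpos hG hj
  rw [sum_range_succ] at hφj₁
  rw [offsetAngle, offsetAngle, div_mul_eq_mul_div, div_mul_eq_mul_div, hφj, hφj₁]
  push_cast
  field_simp
  ring

end OffsetAngle

theorem statement_11_general (n : ℕ) (hn : 1 ≤ n) (k : ℝ) (hk : 0 < k)
    (c : ℕ → ℝ) (hpos : ∀ i ≤ n, 0 < c i)
    (G : ℕ → ℝ)
    (hG : ∀ j : ℕ, 1 ≤ j → j ≤ n →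
      G j = (∏ i ∈ Finset.range j, c i) ^ ((1 : ℝ) / j))
    (hmin : ∀ i ≤ n, Real.exp (-(2 * π * k) / n) * G n ≤ c i) :
    let φ : ℕ → ℝ := fun j =>
      2 * π * ((n : ℝ) - j) / n - ((j : ℝ) / k) * Real.log (G j / G n)
    φ 0 = 2 * π ∧ φ n = 0 ∧
    (∀ j < n, φ (j + 1) ≤ φ j) ∧
    (∀ j < n, c j * Real.exp (-(k * φ j)) ≤ c (j + 1) * Real.exp (-(k * φ (j + 1)))) := by
  intro φ
  have hGn := geomMean_pos_s11 hpos hG hn le_rfl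
  have hlog_c : ∀ i ≤ n, log (G n) - 2 * π * k / n ≤ log (c i) := fun i hi =>
    sub_le_log_of_exp_neg_mul_le hGn (by rw [← neg_div]; exact hmin i hi)
  have hstep : ∀ j < n, k * (φ j - φ (j + 1)) = 2 * π * k / n + log (c j) - log (G n) :=
    fun j hj => mul_offsetAngle_sub_succ hpos hG hk.ne' hj
  refine ⟨offsetAngle_zero (by omega), offsetAngle_self, fun j hj => ?_, fun j hj => ?_⟩
  · have := hstep j hj
    have := hlog_c j hj.le
    exact le_of_mul_le_mul_left (by linarith) hk
  · have := hstep j hj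
    have := hlog_c (j + 1) hj
    exact mul_exp_neg_le_mul_exp_neg (hpos j hj.le) (hpos (j + 1) hj) (by linarith)

/-- Let `n ≥ 1`, `k > 0`, positive speeds `c_0, …, c_n` with
`c_0 = c_n = 1`, geometric means `G j` (with `G 0 = 1`), and suppose every speed is at
least `e^{-2πk/n} G_n`.  Define `φ_j = 2π(n-j)/n - (j/k) ln(G_j/G_n)`.  Then `φ_0 = 2π`,
`φ_n = 0`, the `φ_j` are non-increasing, and `c_j e^{-kφ_j} ≤ c_{j+1} e^{-kφ_{j+1}}`
for every `j < n`. -/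
theorem statement_11 (n : ℕ) (hn : 1 ≤ n) (k : ℝ) (hk : 0 < k)
    (c : ℕ → ℝ) (hpos : ∀ i ≤ n, 0 < c i) (hc0 : c 0 = 1) (hcn : c n = 1)
    (G : ℕ → ℝ) (hG0 : G 0 = 1)
    (hG : ∀ j : ℕ, 1 ≤ j → j ≤ n →
      G j = (∏ i ∈ Finset.range j, c i) ^ ((1 : ℝ) / j))
    (hmin : ∀ i ≤ n, Real.exp (-(2 * π * k) / n) * G n ≤ c i) :
    let φ : ℕ → ℝ := fun j =>
      2 * π * ((n : ℝ) - j) / n - ((j : ℝ) / k) * Real.log (G j / G n)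
    φ 0 = 2 * π ∧ φ n = 0 ∧
    (∀ j < n, φ (j + 1) ≤ φ j) ∧
    (∀ j < n, c j * Real.exp (-(k * φ j)) ≤ c (j + 1) * Real.exp (-(k * φ (j + 1)))) :=
  statement_11_general n hn k hk c hpos G hG hmin
end

section
/- Let φ ∈ (0,π). For λ > 1 define k_λ := (ln λ)/(2π) + ((λ−1)/√(2λ(1−cos φ)))·(1 − φ/(2π)) and p(λ) := (√(λ² − 2λ cos φ + 1)/(λ−1))·e^{2πk_λ}. Let κ₁ be the unique positive real root of x³ + x = 1/(2π) and U₁ := (√(1+κ₁²)/κ₁)·e^{2πκ₁}. Then there exists λ > 1 with p(λ) < U₁; i.e., the minimum of p over (1,∞) is strictly smaller than U₁. -/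
/-!
With `c = √(2(1 - cos φ))` (the chord of the angle `φ`) and `λ = u²`, put `t = (u - u⁻¹)/c`.
Then `p(λ) = (√(1 + t²)/t) · exp(2 log u + (2π - φ) t)` exactly, and `2 log u ≤ u - u⁻¹ = c t`,
so `p(λ) ≤ (√(1 + t²)/t) · exp((2π - φ + c) t)`. Since `c < φ`, the choice
`t = 2πκ/(2π - φ + c)` gives `t > κ`, hence the same exponential factor `e^{2πκ}` as in
`U(κ) = (√(1 + κ²)/κ) e^{2πκ}` but a strictly smaller prefactor.
-/

open Real Set

noncomputable def shortcutSpiralCost (φ lam : ℝ) : ℝ :=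
  √(lam ^ 2 - 2 * lam * cos φ + 1) / (lam - 1) *
    exp (2 * π * (log lam / (2 * π) + (lam - 1) / √(2 * lam * (1 - cos φ)) * (1 - φ / (2 * π))))

noncomputable def planeSearchCost (κ : ℝ) : ℝ :=
  √(1 + κ ^ 2) / κ * exp (2 * π * κ)

lemma two_mul_log_le_sub_inv {u : ℝ} (hu : 1 ≤ u) : 2 * log u ≤ u - u⁻¹ := by
  let f : ℝ → ℝ := fun x => x - x⁻¹ - 2 * log x
  have hf : ∀ x ∈ Ioi (0 : ℝ), HasDerivAt f ((x⁻¹ - 1) ^ 2) x := by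
    intro x hx
    exact (((hasDerivAt_id' x).sub (hasDerivAt_inv hx.ne')).sub
      ((hasDerivAt_log hx.ne').const_mul 2)).congr_deriv (by field_simp; ring)
  have hmono : MonotoneOn f (Ioi 0) :=
    monotoneOn_of_hasDerivWithinAt_nonneg (convex_Ioi 0)
      (fun x hx => (hf x hx).continuousAt.continuousWithinAt)
      (fun x hx => (hf x (interior_subset hx)).hasDerivWithinAt)
      (fun _ _ => sq_nonneg _)
  have := hmono (mem_Ioi.2 one_pos) (mem_Ioi.2 (by linarith)) hu
  simp only [f, inv_one, sub_self, log_one, mul_zero] at this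
  linarith

lemma exists_one_lt_sub_inv_eq {s : ℝ} (hs : 0 < s) : ∃ u, 1 < u ∧ u - u⁻¹ = s := by
  set r := √(s ^ 2 + 4)
  have hr : r ^ 2 = s ^ 2 + 4 := sq_sqrt (by positivity)
  have hr2 : 2 ≤ r := by nlinarith [sqrt_nonneg (s ^ 2 + 4)]
  refine ⟨(s + r) / 2, by linarith, ?_⟩
  field_simp
  linear_combination hr

lemma sqrt_one_add_sq_div_lt_of_lt {x y : ℝ} (hx : 0 < x) (hxy : x < y) :
    √(1 + y ^ 2) / y < √(1 + x ^ 2) / x := by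
  have hy : 0 < y := hx.trans hxy
  rw [div_lt_div_iff₀ hy hx]
  calc √(1 + y ^ 2) * x = √((1 + y ^ 2) * x ^ 2) := by
        rw [sqrt_mul (by positivity), sqrt_sq hx.le]
    _ < √((1 + x ^ 2) * y ^ 2) := sqrt_lt_sqrt (by positivity) (by nlinarith)
    _ = √(1 + x ^ 2) * y := by rw [sqrt_mul (by positivity), sqrt_sq hy.le]

lemma shortcutSpiralCost_sq_eq {φ c u t : ℝ} (hc : 0 < c) (hcφ : c ^ 2 = 2 * (1 - cos φ))
    (hu : 0 < u) (ht : u - u⁻¹ = c * t) :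
    shortcutSpiralCost φ (u ^ 2) = √(1 + t ^ 2) / t * exp (2 * log u + (2 * π - φ) * t) := by
  have hlam : u ^ 2 - 1 = u * c * t := by
    field_simp at ht
    linear_combination ht
  have hnum : √((u ^ 2) ^ 2 - 2 * u ^ 2 * cos φ + 1) = u * c * √(1 + t ^ 2) := by
    rw [← sqrt_sq (by positivity : 0 ≤ u * c), ← sqrt_mul (by positivity)]
    congr 1
    linear_combination (-u ^ 2) * hcφ + (u ^ 2 - 1 + u * c * t) * hlam
  have hden : √(2 * u ^ 2 * (1 - cos φ)) = u * c := by
    rw [← sqrt_sq (by positivity : 0 ≤ u * c)]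
    congr 1
    linear_combination (-u ^ 2) * hcφ
  have hpos : u * c ≠ 0 := by positivity
  rw [shortcutSpiralCost, hnum, hden, hlam, log_pow]
  congr 1
  · field_simp
  · congr 1
    field_simp
    push_cast
    ring

lemma shortcutSpiralCost_sq_le {φ c u t : ℝ} (hc : 0 < c) (hcφ : c ^ 2 = 2 * (1 - cos φ))
    (hu : 1 < u) (ht₀ : 0 < t) (ht : u - u⁻¹ = c * t) :
    shortcutSpiralCost φ (u ^ 2) ≤ √(1 + t ^ 2) / t * exp ((2 * π - φ + c) * t) := by
  rw [shortcutSpiralCost_sq_eq hc hcφ (by linarith) ht]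
  have := two_mul_log_le_sub_inv hu.le
  gcongr
  linarith

lemma exists_shortcutSpiralCost_lt_planeSearchCost {φ κ : ℝ} (hφ : φ ∈ Ioo 0 π) (hκ : 0 < κ) :
    ∃ lam, 1 < lam ∧ shortcutSpiralCost φ lam < planeSearchCost κ := by
  obtain ⟨hφ₀, hφπ⟩ := hφ
  have hcos : cos φ < 1 := by
    simpa using cos_lt_cos_of_nonneg_of_le_pi le_rfl hφπ.le hφ₀
  set c := √(2 * (1 - cos φ))
  have hc : 0 < c := sqrt_pos.2 (by linarith)
  have hcφ : c ^ 2 = 2 * (1 - cos φ) := sq_sqrt (by linarith)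
  have hc_lt : c < φ := by
    rw [sqrt_lt' hφ₀]
    linarith [one_sub_sq_div_two_lt_cos hφ₀.ne']
  have hD : 0 < 2 * π - φ + c := by linarith [pi_pos]
  set t := 2 * π * κ / (2 * π - φ + c)
  have hκt : κ < t := by
    rw [lt_div_iff₀ hD]
    nlinarith [pi_pos]
  have hexp : (2 * π - φ + c) * t = 2 * π * κ := mul_div_cancel₀ _ hD.ne'
  obtain ⟨u, hu, hut⟩ := exists_one_lt_sub_inv_eq (mul_pos hc (hκ.trans hκt))
  refine ⟨u ^ 2, one_lt_pow₀ hu two_ne_zero, ?_⟩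
  calc shortcutSpiralCost φ (u ^ 2)
      ≤ √(1 + t ^ 2) / t * exp ((2 * π - φ + c) * t) :=
        shortcutSpiralCost_sq_le hc hcφ hu (hκ.trans hκt) hut
    _ < planeSearchCost κ := by
        rw [hexp, planeSearchCost]
        exact mul_lt_mul_of_pos_right (sqrt_one_add_sq_div_lt_of_lt hκ hκt) (exp_pos _)

theorem statement_17_general (φ : ℝ) (hφ : φ ∈ Set.Ioo 0 π)
    (κ₁ : ℝ) (hκ₁pos : 0 < κ₁) :
    let kl : ℝ → ℝ := fun lam => Real.log lam / (2 * π) +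
      (lam - 1) / Real.sqrt (2 * lam * (1 - Real.cos φ)) * (1 - φ / (2 * π))
    let p : ℝ → ℝ := fun lam =>
      Real.sqrt (lam ^ 2 - 2 * lam * Real.cos φ + 1) / (lam - 1) *
        Real.exp (2 * π * kl lam)
    let U₁ : ℝ := Real.sqrt (1 + κ₁ ^ 2) / κ₁ * Real.exp (2 * π * κ₁)
    ∃ lam : ℝ, 1 < lam ∧ p lam < U₁ :=
  exists_shortcutSpiralCost_lt_planeSearchCost hφ hκ₁pos

/-- For `φ ∈ (0,π)`, with `k_λ` and `p` as for the Shortcut Spiral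
Trajectory, and `U₁ = (√(1+κ₁²)/κ₁) e^{2πκ₁}` where `κ₁` is the unique positive root
of `x³ + x = 1/(2π)`, there exists `λ > 1` with `p λ < U₁`. -/
theorem statement_17 (φ : ℝ) (hφ : φ ∈ Set.Ioo 0 π)
    (κ₁ : ℝ) (hκ₁pos : 0 < κ₁) (hκ₁ : κ₁ ^ 3 + κ₁ = 1 / (2 * π)) :
    let kl : ℝ → ℝ := fun lam => Real.log lam / (2 * π) +
      (lam - 1) / Real.sqrt (2 * lam * (1 - Real.cos φ)) * (1 - φ / (2 * π))
    let p : ℝ → ℝ := fun lam =>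
      Real.sqrt (lam ^ 2 - 2 * lam * Real.cos φ + 1) / (lam - 1) *
        Real.exp (2 * π * kl lam)
    let U₁ : ℝ := Real.sqrt (1 + κ₁ ^ 2) / κ₁ * Real.exp (2 * π * κ₁)
    ∃ lam : ℝ, 1 < lam ∧ p lam < U₁ :=
  statement_17_general φ hφ κ₁ hκ₁pos
end
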